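/- arXiv:2506.08273 — 2 statements merged into one kernel-verified Lean document; each statement's English description precedes it below -/
import Mathlib

section
/- Let 0 < s, p < ∞ with sp > d. Then there exists a constant c = c(d, s, p) < ∞ such that for every function u : ℤ^d → ℂ with u(0) = 0, one has ∑_{j ∈ ℤ^d \ {0}} |u(j)|^p / ‖j‖_∞^{sp} ≤ c · ∑_{j ∈ ℤ^d} ∑_{m ∈ ℤ^d, m ≠ j} |u(j) − u(m)|^p / ‖j − m‖_∞^{sp+d}. -/
/-!
For `j ≠ 0` compare `u j` with the values of `u` on the cube `Q_j` of radius `‖j‖_∞ / K`: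
`|u j|^p ≤ 2^p (|u j - u m|^p + |u m|^p)` for `m ∈ Q_j`, and average over `m`. Since
`‖j - m‖_∞ ≤ 2‖j‖_∞` and `#Q_j ≥ (‖j‖_∞ / K)^d`, the first part is bounded by the right-hand side.
In the second part exchange the sums: `|u m|^p` receives the weight
`∑_{‖j‖_∞ ≥ K‖m‖_∞} ‖j‖_∞^{-sp} / #Q_j ≲ K^{d - sp} ‖m‖_∞^{-sp}`, so for `K` large (here `sp > d`
is used) the second part is at most half the left-hand side. On the finite sums over the cubes
`‖j‖_∞ ≤ N` it can be absorbed, and the bound passes to the series.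
-/

open scoped ENNReal

/-- The sup-norm `‖x‖_∞` of a point of `ℤ^d`, as a real number. -/
noncomputable def zsup {d : ℕ} (x : Fin d → ℤ) : ℝ :=
  ((Finset.univ.sup fun i => (x i).natAbs : ℕ) : ℝ)

open Finset

namespace FracHardy

lemma add_rpow_le_two_rpow_mul {a b p : ℝ} (ha : 0 ≤ a) (hb : 0 ≤ b) (hp : 0 ≤ p) :
    (a + b) ^ p ≤ 2 ^ p * (a ^ p + b ^ p) := calc
  (a + b) ^ p ≤ (2 * max a b) ^ p := by gcongr; linarith [le_max_left a b, le_max_right a b]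
  _ = 2 ^ p * max a b ^ p := Real.mul_rpow zero_le_two (ha.trans (le_max_left a b))
  _ ≤ 2 ^ p * (a ^ p + b ^ p) := by
    gcongr
    rcases max_choice a b with h | h <;> rw [h] <;>
      linarith [Real.rpow_nonneg ha p, Real.rpow_nonneg hb p]

lemma norm_rpow_le_two_rpow_mul {E : Type*} [SeminormedAddCommGroup E] {p : ℝ} (hp : 0 ≤ p)
    (x y : E) : ‖x‖ ^ p ≤ 2 ^ p * (‖x - y‖ ^ p + ‖y‖ ^ p) :=
  calc ‖x‖ ^ p ≤ (‖x - y‖ + ‖y‖) ^ p := by gcongr; exact norm_le_norm_sub_add x y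
  _ ≤ _ := add_rpow_le_two_rpow_mul (norm_nonneg _) (norm_nonneg _) hp

lemma mul_add_one_rpow_neg_le_sub {a x : ℝ} (ha : 0 < a) (hx : 0 < x) :
    a * (x + 1) ^ (-(a + 1)) ≤ x ^ (-a) - (x + 1) ^ (-a) := by
  have hy : 0 < x + 1 := by linarith
  have hB : 0 < (x + 1) ^ (-a) := Real.rpow_pos_of_pos hy _
  -- `t⁻ᵃ ≥ 1 - a log t ≥ 1 + a (1 - t)` for `t = x / (x + 1)`
  have key : 1 + a / (x + 1) ≤ x ^ (-a) / (x + 1) ^ (-a) := by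
    have ht : 0 < x / (x + 1) := by positivity
    have h1t : x / (x + 1) - 1 = -(1 / (x + 1)) := by field_simp; ring
    have hlog := mul_le_mul_of_nonneg_left ((Real.log_le_sub_one_of_pos ht).trans h1t.le) ha.le
    have hlin : a / (x + 1) ≤ Real.log (x / (x + 1)) * -a := by
      linarith [show a * -(1 / (x + 1)) = -(a / (x + 1)) by ring]
    rw [← Real.div_rpow hx.le hy.le, Real.rpow_def_of_pos ht]
    linarith [Real.add_one_le_exp (Real.log (x / (x + 1)) * -a)]
  rw [show -(a + 1) = -a - 1 by ring, Real.rpow_sub_one hy.ne']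
  calc a * ((x + 1) ^ (-a) / (x + 1)) = (1 + a / (x + 1)) * (x + 1) ^ (-a) - (x + 1) ^ (-a) := by
        ring
    _ ≤ x ^ (-a) - (x + 1) ^ (-a) := by linarith [(le_div_iff₀ hB).1 key]

lemma sum_Icc_rpow_neg_le {a : ℝ} (ha : 0 < a) {M : ℕ} (hM : 1 ≤ M) (N : ℕ) :
    ∑ n ∈ Icc M N, (n : ℝ) ^ (-(a + 1)) ≤ (1 + a⁻¹) * (M : ℝ) ^ (-a) := by
  rcases lt_or_ge N M with hNM | hMN
  · rw [Icc_eq_empty_of_lt hNM, sum_empty]; positivity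
  have telescope : ∀ N, M ≤ N →
      a * ∑ n ∈ Ioc M N, (n : ℝ) ^ (-(a + 1)) ≤ (M : ℝ) ^ (-a) - (N : ℝ) ^ (-a) := by
    intro N hN
    induction N, hN using Nat.le_induction with
    | base => simp
    | succ N hN ih =>
      have hNpos : (0 : ℝ) < N := by exact_mod_cast hM.trans hN
      rw [sum_Ioc_succ_top hN, mul_add]
      push_cast
      linarith [mul_add_one_rpow_neg_le_sub ha hNpos]
  have hM1 : (1 : ℝ) ≤ M := by exact_mod_cast hM
  have hMa : (M : ℝ) ^ (-(a + 1)) ≤ (M : ℝ) ^ (-a) :=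
    Real.rpow_le_rpow_of_exponent_le hM1 (by linarith)
  have hIoc : ∑ n ∈ Ioc M N, (n : ℝ) ^ (-(a + 1)) ≤ (M : ℝ) ^ (-a) / a := by
    rw [le_div_iff₀ ha]
    linarith [telescope N hMN, Real.rpow_nonneg (Nat.cast_nonneg N) (-a)]
  rw [← Ioc_insert_left hMN, sum_insert left_notMem_Ioc, add_mul, inv_mul_eq_div, one_mul]
  linarith

variable {d : ℕ}

def supNorm (x : Fin d → ℤ) : ℕ := univ.sup fun i => (x i).natAbs

lemma zsup_eq_supNorm (x : Fin d → ℤ) : zsup x = supNorm x := rfl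

lemma supNorm_le_iff {x : Fin d → ℤ} {r : ℕ} : supNorm x ≤ r ↔ ∀ i, (x i).natAbs ≤ r := by
  simp [supNorm]

lemma supNorm_pos_iff {x : Fin d → ℤ} : 0 < supNorm x ↔ x ≠ 0 := by
  rw [pos_iff_ne_zero, Ne, ← Nat.le_zero, supNorm_le_iff, Ne, funext_iff]
  simp

lemma supNorm_sub_le (x y : Fin d → ℤ) : supNorm (x - y) ≤ supNorm x + supNorm y :=
  supNorm_le_iff.2 fun i => (Int.natAbs_sub_le _ _).trans <|
    add_le_add (supNorm_le_iff.1 le_rfl i) (supNorm_le_iff.1 le_rfl i)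

noncomputable def cube (d r : ℕ) : Finset (Fin d → ℤ) := Fintype.piFinset fun _ => Icc (-r : ℤ) r

lemma mem_cube {x : Fin d → ℤ} {r : ℕ} : x ∈ cube d r ↔ supNorm x ≤ r := by
  simp only [cube, Fintype.mem_piFinset, mem_Icc, supNorm_le_iff]
  exact forall_congr' fun i => by omega

lemma card_cube (d r : ℕ) : #(cube d r) = (2 * r + 1) ^ d := by
  simp only [cube, Fintype.card_piFinset, Int.card_Icc, prod_const, card_univ, Fintype.card_fin]
  congr 1
  omega

lemma card_filter_supNorm_eq_le (s : Finset (Fin d → ℤ)) {n : ℕ} (hn : 1 ≤ n) :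
    #{x ∈ s | supNorm x = n} ≤ 2 * d * (3 * n) ^ (d - 1) := calc
  #{x ∈ s | supNorm x = n} ≤ #(cube d n \ cube d (n - 1)) :=
      card_le_card fun x hx => by simp only [mem_filter, mem_sdiff, mem_cube] at hx ⊢; omega
  _ = (2 * n + 1) ^ d - (2 * n - 1) ^ d := by
      rw [card_sdiff_of_subset fun x => by simp only [mem_cube]; omega, card_cube, card_cube]
      congr 2; omega
  _ ≤ 2 * d * (2 * n + 1) ^ (d - 1) := by
      zify [Nat.pow_le_pow_left (show 2 * n - 1 ≤ 2 * n + 1 by omega) d]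
      push_cast [show 1 ≤ 2 * n by omega]
      grind [abs_pow_sub_pow_le (α := ℤ) (2 * n + 1) (2 * n - 1) d]
  _ ≤ 2 * d * (3 * n) ^ (d - 1) := by gcongr; omega

noncomputable def tailConst (d : ℕ) (σ : ℝ) : ℝ := 2 * d * 3 ^ (d - 1) * (1 + σ⁻¹)

lemma sum_rpow_neg_supNorm_le (s : Finset (Fin d → ℤ)) {σ : ℝ} (hσ : 0 < σ) {M : ℕ}
    (hM : 1 ≤ M) :
    ∑ j ∈ s with M ≤ supNorm j, (supNorm j : ℝ) ^ (-(σ + d)) ≤ tailConst d σ * (M : ℝ) ^ (-σ) := by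
  rcases Nat.eq_zero_or_pos d with rfl | hd
  · rw [filter_false_of_mem fun j _ => by simp [supNorm]; omega]
    simp [tailConst]
  have hmaps : ∀ j ∈ {j ∈ s | M ≤ supNorm j}, supNorm j ∈ Icc M (s.sup supNorm) := fun j hj => by
    rw [mem_filter] at hj
    exact mem_Icc.2 ⟨hj.2, le_sup hj.1⟩
  rw [← sum_fiberwise_of_maps_to' hmaps fun n : ℕ => (n : ℝ) ^ (-(σ + d))]
  calc _ ≤ ∑ n ∈ Icc M (s.sup supNorm),
          ((2 * d * (3 * n) ^ (d - 1) : ℕ) : ℝ) * (n : ℝ) ^ (-(σ + d)) := by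
        gcongr with n hn
        rw [sum_const, nsmul_eq_mul]
        gcongr
        exact card_filter_supNorm_eq_le _ (hM.trans (mem_Icc.1 hn).1)
    _ = 2 * d * 3 ^ (d - 1) * ∑ n ∈ Icc M (s.sup supNorm), (n : ℝ) ^ (-(σ + 1)) := by
        rw [mul_sum]
        refine sum_congr rfl fun n hn => ?_
        have hn : (0 : ℝ) < n := by exact_mod_cast hM.trans (mem_Icc.1 hn).1
        push_cast
        rw [mul_pow, ← Real.rpow_natCast (n : ℝ) (d - 1), mul_assoc, mul_assoc (3 ^ (d - 1) : ℝ),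
          ← Real.rpow_add hn, Nat.cast_sub hd]
        ring_nf
    _ ≤ tailConst d σ * (M : ℝ) ^ (-σ) := by
        rw [tailConst, mul_assoc _ (1 + σ⁻¹)]
        gcongr
        exact sum_Icc_rpow_neg_le hσ hM _

/-- Spreading `|u j|^p / ‖j‖^σ` uniformly over the cube `cube d (‖j‖ / K)` puts the mass
`|u j|^p / cubeWeight σ K j` on each of its points. -/
noncomputable def cubeWeight (σ : ℝ) (K : ℕ) (j : Fin d → ℤ) : ℝ :=
  (supNorm j : ℝ) ^ σ * #(cube d (supNorm j / K))

lemma cubeWeight_pos {σ : ℝ} {K : ℕ} {j : Fin d → ℤ} (hj : j ≠ 0) : 0 < cubeWeight σ K j := by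
  have := supNorm_pos_iff.2 hj
  rw [cubeWeight, card_cube]
  positivity

lemma pow_le_pow_mul_card_cube {K : ℕ} (hK : 0 < K) (n : ℕ) :
    (n : ℝ) ^ d ≤ (K : ℝ) ^ d * #(cube d (n / K)) := by
  have h : n ≤ K * (2 * (n / K) + 1) :=
    (Nat.lt_mul_div_succ n hK).le.trans (Nat.mul_le_mul_left K (by omega))
  rw [card_cube, Nat.cast_pow, ← mul_pow]
  gcongr
  exact_mod_cast h

lemma rpow_supNorm_sub_le {σ : ℝ} (hσ : 0 < σ) {K : ℕ} (hK : 0 < K) {j m : Fin d → ℤ}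
    (hm : m ∈ cube d (supNorm j / K)) :
    (supNorm (j - m) : ℝ) ^ (σ + d) ≤ 2 ^ (σ + d) * K ^ d * cubeWeight σ K j := by
  have hmj : supNorm m ≤ supNorm j := (mem_cube.1 hm).trans (Nat.div_le_self _ _)
  have h2 : (supNorm (j - m) : ℝ) ≤ 2 * supNorm j := by
    exact_mod_cast (supNorm_sub_le j m).trans (by omega)
  calc (supNorm (j - m) : ℝ) ^ (σ + d) ≤ (2 * supNorm j) ^ (σ + d) := by gcongr
    _ = 2 ^ (σ + d) * ((supNorm j : ℝ) ^ σ * (supNorm j : ℝ) ^ d) := by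
        rw [Real.mul_rpow zero_le_two (Nat.cast_nonneg _),
          Real.rpow_add' (Nat.cast_nonneg _) (by positivity), Real.rpow_natCast]
    _ ≤ 2 ^ (σ + d) * ((supNorm j : ℝ) ^ σ * ((K : ℝ) ^ d * #(cube d (supNorm j / K)))) := by
        gcongr
        exact pow_le_pow_mul_card_cube hK _
    _ = 2 ^ (σ + d) * K ^ d * cubeWeight σ K j := by
        rw [cubeWeight]
        ring

lemma sum_inv_cubeWeight_le (s : Finset (Fin d → ℤ)) {σ : ℝ} (hσ : 0 < σ) {K : ℕ} (hK : 0 < K)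
    {M : ℕ} (hM : 1 ≤ M) :
    ∑ j ∈ s with M * K ≤ supNorm j, (cubeWeight σ K j)⁻¹ ≤
      tailConst d σ * (K : ℝ) ^ (-(σ - d)) * (M : ℝ) ^ (-σ) := by
  have hMK : 1 ≤ M * K := Nat.mul_pos hM hK
  have hK' : (0 : ℝ) < K := by exact_mod_cast hK
  calc _ ≤ ∑ j ∈ s with M * K ≤ supNorm j, (K : ℝ) ^ d * (supNorm j : ℝ) ^ (-(σ + d)) := by
        refine sum_le_sum fun j hj => ?_
        have hn : (0 : ℝ) < supNorm j := by exact_mod_cast hMK.trans (mem_filter.1 hj).2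
        have hw := cubeWeight_pos (σ := σ) (K := K) (supNorm_pos_iff.1 (Nat.cast_pos.1 hn))
        rw [Real.rpow_neg hn.le, Real.rpow_add hn, Real.rpow_natCast, ← div_eq_mul_inv,
          le_div_iff₀ (by positivity), inv_mul_le_iff₀ hw, cubeWeight]
        exact (mul_le_mul_of_nonneg_left (pow_le_pow_mul_card_cube hK _) (by positivity)).trans_eq
          (by ring)
    _ = (K : ℝ) ^ d * ∑ j ∈ s with M * K ≤ supNorm j, (supNorm j : ℝ) ^ (-(σ + d)) := by
        rw [mul_sum]
    _ ≤ (K : ℝ) ^ d * (tailConst d σ * ((M * K : ℕ) : ℝ) ^ (-σ)) := by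
        gcongr
        exact sum_rpow_neg_supNorm_le s hσ hMK
    _ = tailConst d σ * (K : ℝ) ^ (-(σ - d)) * (M : ℝ) ^ (-σ) := by
        rw [Nat.cast_mul, Real.mul_rpow (Nat.cast_nonneg _) hK'.le,
          show -(σ - d) = (d : ℝ) + -σ by ring, Real.rpow_add hK', Real.rpow_natCast]
        ring

lemma notMem_cube_supNorm_div {K : ℕ} (hK : 2 ≤ K) {j : Fin d → ℤ} (hj : j ≠ 0) :
    j ∉ cube d (supNorm j / K) := by
  have := supNorm_pos_iff.2 hj
  rw [mem_cube, not_le]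
  exact (Nat.div_le_div_left hK two_pos).trans_lt (Nat.div_lt_self this one_lt_two)

lemma div_cubeWeight_le_mul_div {σ : ℝ} (hσ : 0 < σ) {K : ℕ} (hK : 2 ≤ K) {j m : Fin d → ℤ}
    (hj : j ≠ 0) (hm : m ∈ cube d (supNorm j / K)) {a : ℝ} (ha : 0 ≤ a) :
    a / cubeWeight σ K j ≤ 2 ^ (σ + d) * K ^ d * (a / (supNorm (j - m) : ℝ) ^ (σ + d)) := by
  have hjm : 0 < (supNorm (j - m) : ℝ) ^ (σ + d) := by
    have := supNorm_pos_iff.2 (sub_ne_zero.2 (ne_of_mem_of_not_mem hm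
      (notMem_cube_supNorm_div hK hj)).symm)
    positivity
  have hC : (0 : ℝ) < 2 ^ (σ + d) * K ^ d := by positivity
  calc a / cubeWeight σ K j
      = 2 ^ (σ + d) * K ^ d * (a / (2 ^ (σ + d) * K ^ d * cubeWeight σ K j)) := by
        rw [← mul_div_assoc, mul_div_mul_left _ _ hC.ne']
    _ ≤ 2 ^ (σ + d) * K ^ d * (a / (supNorm (j - m) : ℝ) ^ (σ + d)) := by
        gcongr
        exact rpow_supNorm_sub_le hσ (by omega) hm

section Averaging

variable {E : Type*} [SeminormedAddCommGroup E] (u : (Fin d → ℤ) → E) {p σ : ℝ} {K : ℕ}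

lemma norm_rpow_div_le_sum_cube (hp : 0 ≤ p) {j : Fin d → ℤ} (hj : j ≠ 0) :
    ‖u j‖ ^ p / (supNorm j : ℝ) ^ σ ≤
      ∑ m ∈ cube d (supNorm j / K), 2 ^ p * (‖u j - u m‖ ^ p + ‖u m‖ ^ p) / cubeWeight σ K j := by
  have hn : (0 : ℝ) < (supNorm j : ℝ) ^ σ := by
    have := supNorm_pos_iff.2 hj
    positivity
  have hcard : (0 : ℝ) < #(cube d (supNorm j / K)) := by rw [card_cube]; positivity
  calc ‖u j‖ ^ p / (supNorm j : ℝ) ^ σ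
      = ∑ m ∈ cube d (supNorm j / K), ‖u j‖ ^ p / cubeWeight σ K j := by
        rw [sum_const, nsmul_eq_mul, cubeWeight]
        field_simp
    _ ≤ _ := sum_le_sum fun m _ =>
        div_le_div_of_nonneg_right (norm_rpow_le_two_rpow_mul hp _ _) (cubeWeight_pos hj).le

lemma sum_sum_norm_rpow_div_cubeWeight_le (hp : p ≠ 0) (hσ : 0 < σ) (hK : 0 < K)
    (hu : u 0 = 0) (N : ℕ) :
    ∑ j ∈ (cube d N).erase 0, ∑ m ∈ cube d (supNorm j / K), ‖u m‖ ^ p / cubeWeight σ K j ≤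
      tailConst d σ * (K : ℝ) ^ (-(σ - d)) *
        ∑ m ∈ (cube d N).erase 0, ‖u m‖ ^ p / (supNorm m : ℝ) ^ σ := by
  have swap : ∀ j m, j ∈ (cube d N).erase 0 ∧ m ∈ cube d (supNorm j / K) ↔
      j ∈ {j ∈ (cube d N).erase 0 | supNorm m * K ≤ supNorm j} ∧ m ∈ cube d N := by
    intro j m
    have := Nat.le_mul_of_pos_right (supNorm m) hK
    simp only [mem_filter, mem_erase, mem_cube, Nat.le_div_iff_mul_le hK]
    constructor
    · rintro ⟨hj, hm⟩
      exact ⟨⟨hj, hm⟩, by omega⟩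
    · rintro ⟨hjm, -⟩
      exact hjm
  rw [sum_comm' swap, ← sum_erase (cube d N) (a := 0) (by simp [hu, Real.zero_rpow hp]), mul_sum]
  refine sum_le_sum fun m hm => ?_
  have hM : 1 ≤ supNorm m := supNorm_pos_iff.2 (ne_of_mem_erase hm)
  simp only [div_eq_mul_inv, ← mul_sum]
  calc ‖u m‖ ^ p * ∑ j ∈ (cube d N).erase 0 with supNorm m * K ≤ supNorm j, (cubeWeight σ K j)⁻¹
      ≤ ‖u m‖ ^ p * (tailConst d σ * (K : ℝ) ^ (-(σ - d)) * (supNorm m : ℝ) ^ (-σ)) := by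
        gcongr
        exact sum_inv_cubeWeight_le _ hσ hK hM
    _ = _ := by
        rw [Real.rpow_neg (Nat.cast_nonneg (supNorm m))]
        ring

theorem sum_cube_norm_rpow_div_le (hp : 0 < p) (hσ : 0 < σ) (hK : 2 ≤ K)
    (hKA : 2 ^ p * (tailConst d σ * (K : ℝ) ^ (-(σ - d))) ≤ 1 / 2) (hu : u 0 = 0) (N : ℕ) :
    ∑ j ∈ (cube d N).erase 0, ‖u j‖ ^ p / (supNorm j : ℝ) ^ σ ≤
      2 * (2 ^ (p + (σ + d)) * (K : ℝ) ^ d) *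
        ∑ j ∈ (cube d N).erase 0, ∑ m ∈ cube d (supNorm j / K),
          ‖u j - u m‖ ^ p / (supNorm (j - m) : ℝ) ^ (σ + d) := by
  set S := ∑ j ∈ (cube d N).erase 0, ‖u j‖ ^ p / (supNorm j : ℝ) ^ σ
  set W := ∑ j ∈ (cube d N).erase 0, ∑ m ∈ cube d (supNorm j / K),
    ‖u j - u m‖ ^ p / (supNorm (j - m) : ℝ) ^ (σ + d)
  have hK0 : 0 < K := by omega
  have average : S ≤
      2 ^ p * ∑ j ∈ (cube d N).erase 0, ∑ m ∈ cube d (supNorm j / K),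
          ‖u j - u m‖ ^ p / cubeWeight σ K j +
        2 ^ p * ∑ j ∈ (cube d N).erase 0, ∑ m ∈ cube d (supNorm j / K),
          ‖u m‖ ^ p / cubeWeight σ K j := by
    refine (sum_le_sum fun j hj =>
      norm_rpow_div_le_sum_cube u (K := K) hp.le (ne_of_mem_erase hj)).trans_eq ?_
    simp only [mul_add, add_div, sum_add_distrib, mul_sum, mul_div_assoc]
  have near : ∑ j ∈ (cube d N).erase 0, ∑ m ∈ cube d (supNorm j / K),
      ‖u j - u m‖ ^ p / cubeWeight σ K j ≤ 2 ^ (σ + d) * K ^ d * W := by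
    simp only [W, mul_sum]
    gcongr with j hj m hm
    exact div_cubeWeight_le_mul_div hσ hK (ne_of_mem_erase hj) hm (by positivity)
  have far := sum_sum_norm_rpow_div_cubeWeight_le u hp.ne' hσ hK0 hu N
  have hS : 0 ≤ S := sum_nonneg fun j _ => by positivity
  have h2p : (0 : ℝ) ≤ 2 ^ p := by positivity
  rw [Real.rpow_add two_pos]
  linarith [mul_le_mul_of_nonneg_left near h2p, mul_le_mul_of_nonneg_left far h2p,
    mul_le_mul_of_nonneg_right hKA hS]

end Averaging

lemma ofReal_sum_sum_le_tsum {ι : Type*} {f : ι → ι → ℝ} (hf : ∀ j m, 0 ≤ f j m) {F : Finset ι}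
    {Q : ι → Finset ι} (hQ : ∀ j ∈ F, j ∉ Q j) :
    ENNReal.ofReal (∑ j ∈ F, ∑ m ∈ Q j, f j m) ≤
      ∑' (j : ι) (m : {m : ι // m ≠ j}), ENNReal.ofReal (f j m) := by
  classical
  rw [ENNReal.ofReal_sum_of_nonneg fun j _ => sum_nonneg fun m _ => hf j m]
  refine (sum_le_sum fun j hj => ?_).trans (ENNReal.sum_le_tsum F)
  rw [ENNReal.ofReal_sum_of_nonneg fun m _ => hf j m,
    ← sum_subtype_of_mem _ fun m hm => ne_of_mem_of_not_mem hm (hQ j hj)]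
  exact ENNReal.sum_le_tsum _

lemma tsum_ofReal_le_of_forall_cube {g : (Fin d → ℤ) → ℝ} (hg : ∀ j, 0 ≤ g j) {X : ℝ≥0∞}
    (h : ∀ N, ENNReal.ofReal (∑ j ∈ (cube d N).erase 0, g j) ≤ X) :
    ∑' j : {j : Fin d → ℤ // j ≠ 0}, ENNReal.ofReal (g j) ≤ X := by
  refine ENNReal.summable.tsum_le_of_sum_le fun t => ?_
  have hsub : t.map (Function.Embedding.subtype _) ⊆
      (cube d (t.sup fun j => supNorm j.1)).erase 0 := by
    intro j hj
    obtain ⟨j', hj', rfl⟩ := mem_map.1 hj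
    exact mem_erase.2 ⟨j'.2, mem_cube.2 (le_sup (f := fun j : {j // j ≠ 0} => supNorm j.1) hj')⟩
  calc ∑ j ∈ t, ENNReal.ofReal (g j)
      = ∑ j ∈ t.map (Function.Embedding.subtype _), ENNReal.ofReal (g j) :=
        (sum_map t (Function.Embedding.subtype _) fun j => ENNReal.ofReal (g j)).symm
    _ ≤ _ := sum_le_sum_of_subset hsub
    _ ≤ X := by
        rw [← ENNReal.ofReal_sum_of_nonneg fun j _ => hg j]
        exact h _

lemma exists_nat_mul_rpow_neg_le (C : ℝ) {a ε : ℝ} (ha : 0 < a) (hε : 0 < ε) (n₀ : ℕ) :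
    ∃ K : ℕ, n₀ ≤ K ∧ C * (K : ℝ) ^ (-a) ≤ ε := by
  have h := ((tendsto_rpow_neg_atTop ha).comp tendsto_natCast_atTop_atTop).const_mul C
  rw [mul_zero] at h
  exact ((Filter.eventually_ge_atTop n₀).and (h.eventually (eventually_le_nhds hε))).exists

end FracHardy

open FracHardy in
theorem frac_hardy_sp_large_Z_general (d : ℕ) (s p : ℝ) (hp : 0 < p)
    (hspd : (d : ℝ) < s * p) :
    ∃ c : ℝ, 0 ≤ c ∧ ∀ u : (Fin d → ℤ) → ℂ, u 0 = 0 →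
      (∑' (j : {j : Fin d → ℤ // j ≠ 0}),
          ENNReal.ofReal (‖u j.1‖ ^ p / zsup j.1 ^ (s * p)))
        ≤ ENNReal.ofReal c *
            ∑' (j : Fin d → ℤ) (m : {m : Fin d → ℤ // m ≠ j}),
              ENNReal.ofReal
                (‖u j - u m.1‖ ^ p / zsup (j - m.1) ^ (s * p + d)) := by
  have hσ : 0 < s * p := (Nat.cast_nonneg d).trans_lt hspd
  obtain ⟨K, hK, hKA⟩ :=
    exists_nat_mul_rpow_neg_le (2 ^ p * tailConst d (s * p)) (sub_pos.2 hspd) one_half_pos 2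
  refine ⟨2 * (2 ^ (p + (s * p + d)) * (K : ℝ) ^ d), by positivity, fun u hu => ?_⟩
  simp only [zsup_eq_supNorm]
  refine tsum_ofReal_le_of_forall_cube (g := fun j => ‖u j‖ ^ p / (supNorm j : ℝ) ^ (s * p))
    (fun j => by positivity) fun N => ?_
  calc _ ≤ ENNReal.ofReal (2 * (2 ^ (p + (s * p + d)) * (K : ℝ) ^ d) *
        ∑ j ∈ (cube d N).erase 0, ∑ m ∈ cube d (supNorm j / K),
          ‖u j - u m‖ ^ p / (supNorm (j - m) : ℝ) ^ (s * p + d)) :=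
        ENNReal.ofReal_le_ofReal <|
          sum_cube_norm_rpow_div_le u hp hσ hK (by rwa [mul_assoc] at hKA) hu N
    _ ≤ _ := by
        rw [ENNReal.ofReal_mul (by positivity)]
        gcongr
        exact ofReal_sum_sum_le_tsum (fun j m => by positivity)
          fun j hj => notMem_cube_supNorm_div hK (ne_of_mem_erase hj)

/-- Fractional discrete Hardy inequality on the full lattice `ℤ^d` for `sp > d`,
for functions with `u(0) = 0`. -/
theorem frac_hardy_sp_large_Z (d : ℕ) (s p : ℝ) (hs : 0 < s) (hp : 0 < p)
    (hspd : (d : ℝ) < s * p) :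
    ∃ c : ℝ, 0 ≤ c ∧ ∀ u : (Fin d → ℤ) → ℂ, u 0 = 0 →
      (∑' (j : {j : Fin d → ℤ // j ≠ 0}),
          ENNReal.ofReal (‖u j.1‖ ^ p / zsup j.1 ^ (s * p)))
        ≤ ENNReal.ofReal c *
            ∑' (j : Fin d → ℤ) (m : {m : Fin d → ℤ // m ≠ j}),
              ENNReal.ofReal
                (‖u j - u m.1‖ ^ p / zsup (j - m.1) ^ (s * p + d)) :=
  frac_hardy_sp_large_Z_general d s p hp hspd
end

section
/- Let 0 < s, p < ∞ with sp > d, and let K ∈ ℕ satisfy 2^{sp+1}·(2^{p−1} ∨ 1)·2^{−K|sp−d|} ≤ 1. Set C(d,p,s,K) = 2^{sp+1+K(d ∧ sp)}·(2^{p−1} ∨ 1) / (1 − 2^{−d}). Then for every function u : ℤ₊^d → ℂ, one has ∑_{j ∈ ℤ₊^d, ‖j‖_∞ ≥ 2^K} |u(j)|^p / ‖j‖_∞^{sp} ≤ C(d,p,s,K) · ∑_{n=1}^{∞} ∑_{j ∈ A_n} ∑_{m ∈ A_{n+K}} |u(j) − u(m)|^p / 2^{(n+K)(d+sp)} + ∑_{j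 ∈ ℤ₊^d, 1 ≤ ‖j‖_∞ < 2^K} |u(j)|^p / ‖j‖_∞^{sp}. -/
open scoped ENNReal

/-- The sup-norm `‖x‖_∞` of a point of `ℤ₊^d`, as a real number. -/
noncomputable def nsup {d : ℕ} (x : Fin d → ℕ) : ℝ := ((Finset.univ.sup x : ℕ) : ℝ)

/-- The dyadic annulus `A_n ⊆ ℤ₊^d` for `n ≥ 1`:
points `j` with `2^(n-1) ≤ ‖j‖_∞ ≤ 2^n - 1`. -/
def Ann (d n : ℕ) : Set (Fin d → ℕ) :=
  {j | 2 ^ (n - 1) ≤ Finset.univ.sup j ∧ Finset.univ.sup j < 2 ^ n}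

/-!
Group the points of `ℤ₊^d` into the dyadic annuli `A_n` and let `S_n` be the part of the left-hand
sum over `A_n`. Averaging `|u(j)|^p ≤ L (|u(j) - u(m)|^p + |u(m)|^p)`, `L = 2^{p-1} ∨ 1`, over all
`m ∈ A_n` for `j ∈ A_{n+K}` gives `S_{n+K} ≤ (C/2) D_n + 2^{sp} L 2^{-K(sp-d)} S_n`, where `D_n` is
the `n`-th difference sum: `A_{n+K}` has `2^{Kd}` times as many points as `A_n`, while its weight
`‖j‖^{-sp}` is smaller by `2^{-Ksp}`, up to a factor `2^{sp}`. As `sp > d`, the hypothesis on `K`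
makes the last coefficient at most `1/2`. Summing over `n`, that half is absorbed by the left-hand
side (on finite partial sums), and what is left over are the annuli `A_1, …, A_K`.
-/

open Finset

lemma rpow_add_le_max_mul {p : ℝ} (hp : 0 < p) {a b : ℝ} (ha : 0 ≤ a) (hb : 0 ≤ b) :
    (a + b) ^ p ≤ max ((2 : ℝ) ^ (p - 1)) 1 * (a ^ p + b ^ p) := by
  rcases le_total 1 p with h1 | h1
  · lift a to NNReal using ha
    lift b to NNReal using hb
    have h := NNReal.coe_le_coe.2 (NNReal.rpow_add_le_mul_rpow_add_rpow a b h1)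
    push_cast at h
    exact h.trans (mul_le_mul_of_nonneg_right (le_max_left _ _) (by positivity))
  · exact (Real.rpow_add_le_add_rpow ha hb hp.le h1).trans (le_mul_of_one_le_left
      (add_nonneg (Real.rpow_nonneg ha p) (Real.rpow_nonneg hb p)) (le_max_right _ _))

lemma norm_rpow_le_max_mul {E : Type*} [SeminormedAddCommGroup E] {p : ℝ} (hp : 0 < p)
    (x y : E) : ‖x‖ ^ p ≤ max ((2 : ℝ) ^ (p - 1)) 1 * (‖x - y‖ ^ p + ‖y‖ ^ p) :=
  (Real.rpow_le_rpow (norm_nonneg _) (norm_le_norm_sub_add x y) hp.le).trans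
    (rpow_add_le_max_mul hp (norm_nonneg _) (norm_nonneg _))

lemma card_mul_sum_norm_rpow_le {ι E : Type*} [SeminormedAddCommGroup E] {p : ℝ} (hp : 0 < p)
    (A B : Finset ι) (u : ι → E) :
    #A * ∑ j ∈ B, ‖u j‖ ^ p ≤ max ((2 : ℝ) ^ (p - 1)) 1 *
      (∑ j ∈ B, ∑ m ∈ A, ‖u j - u m‖ ^ p + #B * ∑ m ∈ A, ‖u m‖ ^ p) := by
  calc (#A : ℝ) * ∑ j ∈ B, ‖u j‖ ^ p = ∑ j ∈ B, ∑ m ∈ A, ‖u j‖ ^ p := by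
        simp only [mul_sum, sum_const, nsmul_eq_mul]
    _ ≤ ∑ j ∈ B, ∑ m ∈ A, max ((2 : ℝ) ^ (p - 1)) 1 * (‖u j - u m‖ ^ p + ‖u m‖ ^ p) :=
        sum_le_sum fun j _ => sum_le_sum fun m _ => norm_rpow_le_max_mul hp _ _
    _ = _ := by simp only [← mul_sum, sum_add_distrib, sum_const, nsmul_eq_mul]

lemma sum_range_add_le_of_le_half {S D : ℕ → ℝ} (hS : ∀ n, 0 ≤ S n) {K : ℕ}
    (h : ∀ n, S (n + K) ≤ D n + S n / 2) (N : ℕ) :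
    ∑ n ∈ range N, S (n + K) ≤ 2 * ∑ n ∈ range N, D n + ∑ n ∈ range K, S n := by
  have h_step : ∑ n ∈ range N, S (n + K) ≤ ∑ n ∈ range N, D n + (∑ n ∈ range N, S n) / 2 := by
    rw [sum_div, ← sum_add_distrib]
    exact sum_le_sum fun n _ => h n
  have h_split : ∑ n ∈ range N, S n ≤ ∑ n ∈ range K, S n + ∑ n ∈ range N, S (n + K) :=
    calc ∑ n ∈ range N, S n ≤ ∑ n ∈ range (K + N), S n :=
          sum_le_sum_of_subset_of_nonneg (range_subset_range.2 (Nat.le_add_left N K))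
            fun n _ _ => hS n
      _ = _ := by simp_rw [sum_range_add, add_comm K]
  linarith

def cube (d N : ℕ) : Finset (Fin d → ℕ) := Fintype.piFinset fun _ => range N

def annulus (d n : ℕ) : Finset (Fin d → ℕ) := cube d (2 ^ n) \ cube d (2 ^ (n - 1))

section Annulus

variable {d : ℕ}

lemma mem_cube {N : ℕ} (hN : 0 < N) {j : Fin d → ℕ} : j ∈ cube d N ↔ univ.sup j < N := by
  simp [cube, Finset.sup_lt_iff (show (⊥ : ℕ) < N from hN)]

lemma card_cube (d N : ℕ) : #(cube d N) = N ^ d := by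
  simp [cube]

lemma mem_annulus {n : ℕ} {j : Fin d → ℕ} :
    j ∈ annulus d n ↔ 2 ^ (n - 1) ≤ univ.sup j ∧ univ.sup j < 2 ^ n := by
  rw [annulus, mem_sdiff, mem_cube (by positivity), mem_cube (by positivity), not_lt, and_comm]

lemma coe_annulus (d n : ℕ) : (annulus d n : Set (Fin d → ℕ)) = Ann d n := by
  ext j
  simp [Ann, mem_annulus]

lemma card_annulus_succ (d n : ℕ) : (#(annulus d (n + 1)) : ℝ) = (2 ^ d) ^ n * (2 ^ d - 1) := by
  have h_le : 2 ^ n ≤ 2 ^ (n + 1) := Nat.pow_le_pow_right two_pos n.le_succ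
  have h_sub : cube d (2 ^ n) ⊆ cube d (2 ^ (n + 1)) :=
    Fintype.piFinset_subset _ _ fun _ => range_subset_range.2 h_le
  rw [annulus, Nat.add_sub_cancel, card_sdiff_of_subset h_sub, card_cube, card_cube,
    Nat.cast_sub (Nat.pow_le_pow_left h_le d)]
  push_cast
  rw [pow_succ, mul_pow, ← pow_mul, ← pow_mul, mul_comm n]
  ring

lemma disjoint_annulus {a b : ℕ} (hab : a < b) : Disjoint (annulus d a) (annulus d b) := by
  refine disjoint_left.2 fun j hja hjb => ?_
  have : 2 ^ a ≤ 2 ^ (b - 1) := Nat.pow_le_pow_right two_pos (by omega)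
  have := (mem_annulus.1 hja).2
  have := (mem_annulus.1 hjb).1
  omega

lemma mem_annulus_log {j : Fin d → ℕ} (hj : univ.sup j ≠ 0) :
    j ∈ annulus d (Nat.log 2 (univ.sup j) + 1) :=
  mem_annulus.2 ⟨Nat.pow_log_le_self 2 hj, Nat.lt_pow_succ_log_self one_lt_two _⟩

lemma nsup_nonneg (j : Fin d → ℕ) : 0 ≤ nsup j := Nat.cast_nonneg _

lemma two_pow_le_nsup {n : ℕ} {j : Fin d → ℕ} (hj : j ∈ annulus d (n + 1)) :
    (2 : ℝ) ^ n ≤ nsup j := by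
  have h := (mem_annulus.1 hj).1
  rw [Nat.add_sub_cancel] at h
  unfold nsup
  exact_mod_cast h

lemma nsup_le_two_pow {n : ℕ} {j : Fin d → ℕ} (hj : j ∈ annulus d n) :
    nsup j ≤ (2 : ℝ) ^ n := by
  unfold nsup
  exact_mod_cast (mem_annulus.1 hj).2.le

end Annulus

section AnnulusSum

variable {d : ℕ} {E : Type*} [SeminormedAddCommGroup E] (p σ : ℝ) (u : (Fin d → ℕ) → E)

noncomputable def annulusSum (n : ℕ) : ℝ := ∑ j ∈ annulus d n, ‖u j‖ ^ p / nsup j ^ σ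

noncomputable def annulusDiffSum (K n : ℕ) : ℝ :=
  ∑ j ∈ annulus d n, ∑ m ∈ annulus d (n + K),
    ‖u j - u m‖ ^ p / (2 : ℝ) ^ (((n + K : ℕ) : ℝ) * ((d : ℝ) + σ))

lemma annulusSum_nonneg (n : ℕ) : 0 ≤ annulusSum p σ u n :=
  sum_nonneg fun j _ => div_nonneg (by positivity) (Real.rpow_nonneg (nsup_nonneg j) σ)

lemma annulusDiffSum_nonneg (K n : ℕ) : 0 ≤ annulusDiffSum p σ u K n :=
  sum_nonneg fun _ _ => sum_nonneg fun _ _ => by positivity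

variable {σ}

lemma annulusSum_succ_le (hσ : 0 ≤ σ) (n : ℕ) :
    annulusSum p σ u (n + 1) ≤ (∑ j ∈ annulus d (n + 1), ‖u j‖ ^ p) / (2 ^ σ) ^ n := by
  rw [annulusSum, sum_div]
  refine sum_le_sum fun j hj => div_le_div_of_nonneg_left (by positivity) (by positivity) ?_
  rw [Real.rpow_pow_comm zero_le_two]
  exact Real.rpow_le_rpow (by positivity) (two_pow_le_nsup hj) hσ

lemma sum_norm_rpow_le_annulusSum (hσ : 0 ≤ σ) (n : ℕ) :
    ∑ j ∈ annulus d (n + 1), ‖u j‖ ^ p ≤ (2 ^ σ) ^ (n + 1) * annulusSum p σ u (n + 1) := by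
  rw [annulusSum, mul_sum]
  refine sum_le_sum fun j hj => ?_
  have h_pos : 0 < nsup j ^ σ :=
    Real.rpow_pos_of_pos ((pow_pos two_pos n).trans_le (two_pow_le_nsup hj)) σ
  rw [← mul_div_assoc, le_div_iff₀ h_pos, mul_comm, Real.rpow_pow_comm zero_le_two]
  gcongr
  exacts [nsup_nonneg j, nsup_le_two_pow hj]

lemma annulusDiffSum_eq (K n : ℕ) :
    annulusDiffSum p σ u K n = (∑ j ∈ annulus d (n + K), ∑ m ∈ annulus d n, ‖u j - u m‖ ^ p) /
      (2 ^ d * 2 ^ σ) ^ (n + K) := by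
  rw [annulusDiffSum, sum_comm, sum_div]
  refine sum_congr rfl fun j _ => ?_
  rw [sum_div]
  refine sum_congr rfl fun m _ => ?_
  rw [norm_sub_rev, mul_comm, Real.rpow_mul_natCast zero_le_two, Real.rpow_add two_pos,
    Real.rpow_natCast]

end AnnulusSum

theorem annulusSum_succ_add_le {d : ℕ} {E : Type*} [SeminormedAddCommGroup E] {p σ : ℝ}
    (hd : 0 < d) (hp : 0 < p) (hσ : 0 ≤ σ) (u : (Fin d → ℕ) → E) (K n : ℕ) :
    annulusSum p σ u (n + 1 + K) ≤
      2 ^ σ * (2 ^ d) ^ (K + 1) * max ((2 : ℝ) ^ (p - 1)) 1 / (2 ^ d - 1) *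
          annulusDiffSum p σ u K (n + 1) +
        2 ^ σ * (2 ^ d) ^ K * max ((2 : ℝ) ^ (p - 1)) 1 / (2 ^ σ) ^ K *
          annulusSum p σ u (n + 1) := by
  set L := max ((2 : ℝ) ^ (p - 1)) 1
  set q : ℝ := 2 ^ σ
  set t : ℝ := 2 ^ d
  set A := annulus d (n + 1)
  set B := annulus d (n + 1 + K)
  set P := ∑ m ∈ A, ‖u m‖ ^ p
  set Δ := ∑ j ∈ B, ∑ m ∈ A, ‖u j - u m‖ ^ p
  have hq : q ≠ 0 := by positivity
  have ht : t ≠ 0 := by positivity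
  have ht₁ : 0 < t - 1 := sub_pos.2 (one_lt_pow₀ one_lt_two hd.ne')
  have hA : (#A : ℝ) = t ^ n * (t - 1) := card_annulus_succ d n
  have hB : (#B : ℝ) = t ^ (n + K) * (t - 1) := by
    have h := card_annulus_succ d (n + K)
    rwa [add_right_comm] at h
  have hW : annulusSum p σ u (n + 1 + K) ≤ (∑ j ∈ B, ‖u j‖ ^ p) / q ^ (n + K) := by
    have h := annulusSum_succ_le p u hσ (n + K)
    rwa [add_right_comm] at h
  have hΔ : annulusDiffSum p σ u K (n + 1) = Δ / (t * q) ^ (n + 1 + K) :=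
    annulusDiffSum_eq p u K (n + 1)
  have h_avg : #A * ∑ j ∈ B, ‖u j‖ ^ p ≤ L * (Δ + #B * P) := card_mul_sum_norm_rpow_le hp A B u
  have hA_pos : (0 : ℝ) < #A := by rw [hA]; positivity
  calc annulusSum p σ u (n + 1 + K) ≤ L * (Δ + #B * P) / #A / q ^ (n + K) := by
        refine hW.trans ?_
        gcongr
        rwa [le_div_iff₀ hA_pos, mul_comm]
    _ = q * t ^ (K + 1) * L / (t - 1) * (Δ / (t * q) ^ (n + 1 + K)) +
        t ^ K * L / q ^ (n + K) * P := by
        rw [hA, hB]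
        field_simp
        ring
    _ ≤ q * t ^ (K + 1) * L / (t - 1) * (Δ / (t * q) ^ (n + 1 + K)) +
        t ^ K * L / q ^ (n + K) * (q ^ (n + 1) * annulusSum p σ u (n + 1)) := by
        gcongr
        exact sum_norm_rpow_le_annulusSum p u hσ n
    _ = _ := by
        rw [hΔ]
        field_simp
        ring

lemma two_rpow_mul_two_pow_div_le_half {d K : ℕ} {p σ : ℝ} (hdσ : (d : ℝ) ≤ σ)
    (hK : (2 : ℝ) ^ (σ + 1) * max ((2 : ℝ) ^ (p - 1)) 1 * (2 : ℝ) ^ (-(K : ℝ) * |σ - d|) ≤ 1) :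
    2 ^ σ * (2 ^ d) ^ K * max ((2 : ℝ) ^ (p - 1)) 1 / (2 ^ σ) ^ K ≤ 1 / 2 := by
  have h_exp : (2 : ℝ) ^ (-(K : ℝ) * |σ - d|) = (2 ^ d) ^ K / (2 ^ σ) ^ K := by
    rw [abs_of_nonneg (sub_nonneg.2 hdσ), show -(K : ℝ) * (σ - d) = d * K - σ * K by ring,
      Real.rpow_sub two_pos, Real.rpow_mul_natCast zero_le_two, Real.rpow_mul_natCast zero_le_two,
      Real.rpow_natCast]
  rw [h_exp, Real.rpow_add_one two_ne_zero] at hK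
  linarith [show (2 : ℝ) ^ σ * 2 * max ((2 : ℝ) ^ (p - 1)) 1 * ((2 ^ d) ^ K / (2 ^ σ) ^ K) =
    2 * (2 ^ σ * (2 ^ d) ^ K * max ((2 : ℝ) ^ (p - 1)) 1 / (2 ^ σ) ^ K) by ring]

lemma two_mul_two_rpow_mul_div_eq {d : ℕ} (hd : 0 < d) (K : ℕ) (L σ : ℝ) :
    2 * (2 ^ σ * (2 ^ d) ^ (K + 1) * L / (2 ^ d - 1)) =
      (2 : ℝ) ^ (σ + 1 + K * d) * L / (1 - 2 ^ (-(d : ℝ))) := by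
  have ht : (2 : ℝ) ^ d - 1 ≠ 0 := (sub_pos.2 (one_lt_pow₀ one_lt_two hd.ne')).ne'
  rw [Real.rpow_add two_pos, Real.rpow_add_one two_ne_zero, Real.rpow_neg zero_le_two,
    mul_comm (K : ℝ), Real.rpow_mul_natCast zero_le_two, Real.rpow_natCast]
  field_simp
  ring

theorem sum_range_annulusSum_le {d K : ℕ} {E : Type*} [SeminormedAddCommGroup E] {p σ : ℝ}
    (hd : 0 < d) (hp : 0 < p) (hdσ : (d : ℝ) ≤ σ)
    (hK : (2 : ℝ) ^ (σ + 1) * max ((2 : ℝ) ^ (p - 1)) 1 * (2 : ℝ) ^ (-(K : ℝ) * |σ - d|) ≤ 1)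
    (u : (Fin d → ℕ) → E) (N : ℕ) :
    ∑ n ∈ range N, annulusSum p σ u (n + 1 + K) ≤
      (2 : ℝ) ^ (σ + 1 + K * d) * max ((2 : ℝ) ^ (p - 1)) 1 / (1 - 2 ^ (-(d : ℝ))) *
          ∑ n ∈ range N, annulusDiffSum p σ u K (n + 1) +
        ∑ n ∈ range K, annulusSum p σ u (n + 1) := by
  set C := 2 ^ σ * (2 ^ d) ^ (K + 1) * max ((2 : ℝ) ^ (p - 1)) 1 / (2 ^ d - 1)
  have h_step (n : ℕ) : annulusSum p σ u (n + K + 1) ≤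
      C * annulusDiffSum p σ u K (n + 1) + annulusSum p σ u (n + 1) / 2 := by
    rw [add_right_comm]
    refine (annulusSum_succ_add_le hd hp ((Nat.cast_nonneg d).trans hdσ) u K n).trans ?_
    have := annulusSum_nonneg p σ u (n + 1)
    gcongr
    linarith [mul_le_mul_of_nonneg_right (two_rpow_mul_two_pow_div_le_half hdσ hK) this]
  have h := sum_range_add_le_of_le_half (fun n => annulusSum_nonneg p σ u (n + 1)) h_step N
  simp only [add_right_comm _ K 1] at h
  rwa [← two_mul_two_rpow_mul_div_eq hd, mul_assoc, mul_sum]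

lemma tsum_ofReal_le_of_sum_range_le {a b : ℕ → ℝ} {C t : ℝ} (ha : ∀ n, 0 ≤ a n)
    (hb : ∀ n, 0 ≤ b n) (hC : 0 ≤ C)
    (h : ∀ N, ∑ n ∈ range N, a n ≤ C * ∑ n ∈ range N, b n + t) :
    ∑' n, ENNReal.ofReal (a n) ≤
      ENNReal.ofReal C * ∑' n, ENNReal.ofReal (b n) + ENNReal.ofReal t := by
  rw [ENNReal.tsum_eq_iSup_nat]
  refine iSup_le fun N => ?_
  calc ∑ n ∈ range N, ENNReal.ofReal (a n) = ENNReal.ofReal (∑ n ∈ range N, a n) :=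
        (ENNReal.ofReal_sum_of_nonneg fun n _ => ha n).symm
    _ ≤ ENNReal.ofReal (C * ∑ n ∈ range N, b n) + ENNReal.ofReal t :=
        (ENNReal.ofReal_le_ofReal (h N)).trans ENNReal.ofReal_add_le
    _ ≤ ENNReal.ofReal C * ∑' n, ENNReal.ofReal (b n) + ENNReal.ofReal t := by
        rw [ENNReal.ofReal_mul hC, ENNReal.ofReal_sum_of_nonneg fun n _ => hb n]
        gcongr
        exact ENNReal.sum_le_tsum _

section AnnulusTsum

variable {d : ℕ}

lemma tsum_Ann_eq_sum_annulus (f : (Fin d → ℕ) → ℝ≥0∞) (n : ℕ) :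
    ∑' j : Ann d n, f j = ∑ j ∈ annulus d n, f j := by
  rw [← coe_annulus]
  exact Finset.tsum_subtype' _ f

lemma tsum_Ann_tsum_Ann_ofReal {g : (Fin d → ℕ) → (Fin d → ℕ) → ℝ} (hg : ∀ j m, 0 ≤ g j m)
    (a b : ℕ) :
    ∑' (j : Ann d a) (m : Ann d b), ENNReal.ofReal (g j m) =
      ENNReal.ofReal (∑ j ∈ annulus d a, ∑ m ∈ annulus d b, g j m) := by
  rw [ENNReal.ofReal_sum_of_nonneg fun j _ => sum_nonneg fun m _ => hg j m,
    ← tsum_Ann_eq_sum_annulus]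
  refine tsum_congr fun j => ?_
  rw [ENNReal.ofReal_sum_of_nonneg fun m _ => hg j m, ← tsum_Ann_eq_sum_annulus]

variable (f : (Fin d → ℕ) → ℝ≥0∞)

lemma tsum_two_pow_le_sup_le_tsum_sum_annulus (K : ℕ) :
    ∑' j : {j : Fin d → ℕ // 2 ^ K ≤ univ.sup j}, f j ≤
      ∑' n, ∑ j ∈ annulus d (n + 1 + K), f j := by
  have h_sub : {j : Fin d → ℕ | 2 ^ K ≤ univ.sup j} ⊆ ⋃ n, Ann d (n + 1 + K) := by
    intro j hj
    have hj0 : univ.sup j ≠ 0 := (Nat.two_pow_pos K).trans_le hj |>.ne'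
    have hK : K ≤ Nat.log 2 (univ.sup j) := Nat.le_log_of_pow_le one_lt_two hj
    refine Set.mem_iUnion.2 ⟨Nat.log 2 (univ.sup j) - K, ?_⟩
    rw [show Nat.log 2 (univ.sup j) - K + 1 + K = Nat.log 2 (univ.sup j) + 1 by omega,
      ← coe_annulus]
    exact mem_annulus_log hj0
  calc _ ≤ ∑' j : ⋃ n, Ann d (n + 1 + K), f j := ENNReal.tsum_mono_subtype f h_sub
    _ ≤ ∑' n, ∑' j : Ann d (n + 1 + K), f j := ENNReal.tsum_iUnion_le_tsum f _
    _ = _ := by simp_rw [tsum_Ann_eq_sum_annulus]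

lemma sum_range_sum_annulus_le_tsum (K : ℕ) :
    ∑ n ∈ range K, ∑ j ∈ annulus d (n + 1), f j ≤
      ∑' j : {j : Fin d → ℕ // 1 ≤ univ.sup j ∧ univ.sup j < 2 ^ K}, f j := by
  have h_disj : (range K : Set ℕ).PairwiseDisjoint fun n => annulus d (n + 1) :=
    fun a _ b _ hab => hab.lt_or_gt.elim (fun h => disjoint_annulus (by omega))
      (fun h => (disjoint_annulus (by omega)).symm)
  have h_sub : ↑((range K).biUnion fun n => annulus d (n + 1)) ⊆
      {j : Fin d → ℕ | 1 ≤ univ.sup j ∧ univ.sup j < 2 ^ K} := by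
    intro j hj
    obtain ⟨n, hn, hjn⟩ := mem_biUnion.1 hj
    obtain ⟨h_ge, h_lt⟩ := mem_annulus.1 hjn
    exact ⟨Nat.one_le_two_pow.trans h_ge,
      h_lt.trans_le (Nat.pow_le_pow_right two_pos (mem_range.1 hn))⟩
  rw [← sum_biUnion h_disj, ← Finset.tsum_subtype']
  exact ENNReal.tsum_mono_subtype f h_sub

end AnnulusTsum

theorem main_lemma_sp_large_general (d K : ℕ) (s p : ℝ) (hd : 0 < d) (hp : 0 < p)
    (hspd : (d : ℝ) < s * p)
    (hK : (2 : ℝ) ^ (s * p + 1) * max ((2 : ℝ) ^ (p - 1)) 1 *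
        (2 : ℝ) ^ (-(K : ℝ) * |s * p - (d : ℝ)|) ≤ 1) :
    ∀ u : (Fin d → ℕ) → ℂ,
      (∑' (j : {j : Fin d → ℕ // 2 ^ K ≤ Finset.univ.sup j}),
          ENNReal.ofReal (‖u j.1‖ ^ p / nsup j.1 ^ (s * p)))
        ≤ ENNReal.ofReal
            ((2 : ℝ) ^ (s * p + 1 + (K : ℝ) * min (d : ℝ) (s * p)) *
              max ((2 : ℝ) ^ (p - 1)) 1 / (1 - (2 : ℝ) ^ (-(d : ℝ)))) *
          (∑' (n : ℕ) (j : Ann d (n + 1)) (m : Ann d (n + 1 + K)),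
            ENNReal.ofReal (‖u j.1 - u m.1‖ ^ p /
              (2 : ℝ) ^ (((n + 1 + K : ℕ) : ℝ) * ((d : ℝ) + s * p)))) +
          ∑' (j : {j : Fin d → ℕ // 1 ≤ Finset.univ.sup j ∧ Finset.univ.sup j < 2 ^ K}),
            ENNReal.ofReal (‖u j.1‖ ^ p / nsup j.1 ^ (s * p)) := by
  intro u
  rw [min_eq_left hspd.le]
  set F : (Fin d → ℕ) → ℝ≥0∞ := fun j => ENNReal.ofReal (‖u j‖ ^ p / nsup j ^ (s * p))
  have hF (n : ℕ) : ∑ j ∈ annulus d n, F j = ENNReal.ofReal (annulusSum p (s * p) u n) :=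
    (ENNReal.ofReal_sum_of_nonneg fun j _ =>
      div_nonneg (by positivity) (Real.rpow_nonneg (nsup_nonneg j) _)).symm
  have hD (n : ℕ) : ∑' (j : Ann d (n + 1)) (m : Ann d (n + 1 + K)),
      ENNReal.ofReal (‖u j.1 - u m.1‖ ^ p /
        (2 : ℝ) ^ (((n + 1 + K : ℕ) : ℝ) * ((d : ℝ) + s * p))) =
      ENNReal.ofReal (annulusDiffSum p (s * p) u K (n + 1)) := by
    rw [annulusDiffSum, ← tsum_Ann_tsum_Ann_ofReal fun j m => by positivity]
  have hC : 0 ≤ (2 : ℝ) ^ (s * p + 1 + K * d) * max ((2 : ℝ) ^ (p - 1)) 1 /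
      (1 - 2 ^ (-(d : ℝ))) :=
    div_nonneg (by positivity)
      (sub_nonneg.2 (Real.rpow_le_one_of_one_le_of_nonpos one_le_two (by simp)))
  calc _ ≤ ∑' n, ∑ j ∈ annulus d (n + 1 + K), F j :=
        tsum_two_pow_le_sup_le_tsum_sum_annulus F K
    _ = ∑' n, ENNReal.ofReal (annulusSum p (s * p) u (n + 1 + K)) := by simp_rw [hF]
    _ ≤ _ := tsum_ofReal_le_of_sum_range_le (fun n => annulusSum_nonneg p _ u _)
        (fun n => annulusDiffSum_nonneg p _ u K _) hC (sum_range_annulusSum_le hd hp hspd.le hK u)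
    _ ≤ _ := by
        rw [ENNReal.ofReal_sum_of_nonneg fun n _ => annulusSum_nonneg p _ u _]
        simp_rw [hD, ← hF]
        gcongr
        exact sum_range_sum_annulus_le_tsum F K

/-- Main lemma, case `sp > d`. -/
theorem main_lemma_sp_large (d K : ℕ) (s p : ℝ) (hd : 0 < d) (hs : 0 < s) (hp : 0 < p)
    (hspd : (d : ℝ) < s * p)
    (hK : (2 : ℝ) ^ (s * p + 1) * max ((2 : ℝ) ^ (p - 1)) 1 *
        (2 : ℝ) ^ (-(K : ℝ) * |s * p - (d : ℝ)|) ≤ 1) :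
    ∀ u : (Fin d → ℕ) → ℂ,
      (∑' (j : {j : Fin d → ℕ // 2 ^ K ≤ Finset.univ.sup j}),
          ENNReal.ofReal (‖u j.1‖ ^ p / nsup j.1 ^ (s * p)))
        ≤ ENNReal.ofReal
            ((2 : ℝ) ^ (s * p + 1 + (K : ℝ) * min (d : ℝ) (s * p)) *
              max ((2 : ℝ) ^ (p - 1)) 1 / (1 - (2 : ℝ) ^ (-(d : ℝ)))) *
          (∑' (n : ℕ) (j : Ann d (n + 1)) (m : Ann d (n + 1 + K)),
            ENNReal.ofReal (‖u j.1 - u m.1‖ ^ p /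
              (2 : ℝ) ^ (((n + 1 + K : ℕ) : ℝ) * ((d : ℝ) + s * p)))) +
          ∑' (j : {j : Fin d → ℕ // 1 ≤ Finset.univ.sup j ∧ Finset.univ.sup j < 2 ^ K}),
            ENNReal.ofReal (‖u j.1‖ ^ p / nsup j.1 ^ (s * p)) :=
  main_lemma_sp_large_general d K s p hd hp hspd hK
end
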